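/- arXiv:2501.08715 — 3 statements merged into one kernel-verified Lean document; each statement's English description precedes it below -/
import Mathlib

section
/- Let μ(ξ) = (2π)^{-3/2} e^{-|ξ|²/2} be the standard Gaussian on ℝ³, let n = (0,0,1), and let u_B, u_w ∈ ℝ³ and θ_B, θ_w > 0. Define ξ ↦ V_B(ξ) = (√θ_w ξ + u_w - u_B)/√θ_B and suppose (u_w - u_B)·n = 0. Then ∫_{V·n<0} (V·n)(V·t)(-μ(V) + (θ_B²/θ_w²) μ(ξ(V))) dV = -((u_w - u_B)·t)/√(2πθ_B), where ξ(V) = (√θ_B V + u_B - u_w)/√θ_w and t = (1,0,0). -/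
open MeasureTheory Set Filter Real

lemma aux_integrable_xexp {c : ℝ} (hc : 0 < c) :
    Integrable fun x : ℝ => x * Real.exp (-c * x ^ 2) := by
  have := integrable_rpow_mul_exp_neg_mul_sq hc (by norm_num : (-1:ℝ) < 1)
  simpa [Real.rpow_one] using this

lemma aux_integral_xexp_zero (c : ℝ) :
    ∫ x : ℝ, x * Real.exp (-c * x ^ 2) = 0 := by
  have h := integral_neg_eq_self (fun x : ℝ => x * Real.exp (-c * x ^ 2)) volume
  have h2 : (fun x : ℝ => (-x) * Real.exp (-c * (-x) ^ 2))
      = fun x : ℝ => -(x * Real.exp (-c * x ^ 2)) := by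
    funext x; rw [neg_sq]; ring
  rw [h2, integral_neg] at h
  linarith

lemma aux_sq_atBot : Tendsto (fun x : ℝ => x ^ 2) atBot atTop := by
  have h := (tendsto_pow_atTop (α := ℝ) (n := 2) (by norm_num)).comp tendsto_neg_atBot_atTop
  simpa [Function.comp_def, neg_pow] using h

lemma aux_integral_Iio_xexp {c : ℝ} (hc : 0 < c) :
    ∫ x in Iio (0:ℝ), x * Real.exp (-c * x ^ 2) = -(2*c)⁻¹ := by
  rw [← integral_Iic_eq_integral_Iio]
  have hF : ∀ x ∈ Iic (0:ℝ), HasDerivAt (fun x : ℝ => -(2*c)⁻¹ * Real.exp (-c * x ^ 2))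
      (x * Real.exp (-c * x ^ 2)) x := by
    intro x _
    have h1 : HasDerivAt (fun x : ℝ => -c * x ^ 2) (-c * (2 * x)) x := by
      simpa using (hasDerivAt_pow 2 x).const_mul (-c)
    have h2 := (h1.exp).const_mul (-(2*c)⁻¹)
    convert h2 using 1
    · rfl
    · rfl
    field_simp
  have hexp : Tendsto (fun x : ℝ => Real.exp (-c * x ^ 2)) atBot (nhds 0) :=
    Real.tendsto_exp_atBot.comp (aux_sq_atBot.const_mul_atTop_of_neg (by linarith))
  have htend : Tendsto (fun x : ℝ => -(2*c)⁻¹ * Real.exp (-c * x ^ 2)) atBot (nhds 0) := by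
    simpa using hexp.const_mul (-(2*c)⁻¹)
  rw [integral_Iic_of_hasDerivAt_of_tendsto' hF ((aux_integrable_xexp hc).integrableOn) htend]
  simp

lemma aux_integral_gauss : ∫ x : ℝ, Real.exp (-(1/2 : ℝ) * x ^ 2) = Real.sqrt (2 * Real.pi) := by
  rw [integral_gaussian, show Real.pi / (1/2 : ℝ) = 2 * Real.pi by ring]

lemma aux_integral_comp_affine (f : ℝ → ℝ) {b : ℝ} (d : ℝ) (hb : 0 < b) :
    ∫ x : ℝ, f (b * x + d) = b⁻¹ * ∫ x, f x := by
  have h1 := MeasureTheory.Measure.integral_comp_mul_left (fun y => f (y + d)) b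
  rw [integral_add_right_eq_self] at h1
  rw [h1, abs_of_pos (inv_pos.2 hb), smul_eq_mul]

lemma aux_integrable_comp_affine {f : ℝ → ℝ} (hf : Integrable f) {b : ℝ} (d : ℝ) (hb : b ≠ 0) :
    Integrable fun x : ℝ => f (b * x + d) :=
  (hf.comp_add_right d).comp_mul_left' hb

lemma aux_split3 (f₀ f₁ f₂ : ℝ → ℝ) :
    ∫ x in {x : Fin 3 → ℝ | x 2 < 0}, f₀ (x 0) * f₁ (x 1) * f₂ (x 2)
      = (∫ x, f₀ x) * (∫ x, f₁ x) * ∫ x in Iio (0:ℝ), f₂ x := by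
  have hs : MeasurableSet {x : Fin 3 → ℝ | x 2 < 0} :=
    measurableSet_lt (measurable_pi_apply 2) measurable_const
  rw [← integral_indicator hs]
  have heq : ∀ x : Fin 3 → ℝ,
      ({x : Fin 3 → ℝ | x 2 < 0}).indicator (fun x => f₀ (x 0) * f₁ (x 1) * f₂ (x 2)) x
      = f₀ (x 0) * f₁ (x 1) * (Iio (0:ℝ)).indicator f₂ (x 2) := by
    intro x
    by_cases hx : x 2 < 0
    · simp [Set.indicator_apply, Set.mem_setOf_eq, Set.mem_Iio, hx]
    · simp [Set.indicator_apply, Set.mem_setOf_eq, Set.mem_Iio, hx]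
  simp_rw [heq]
  have key := MeasureTheory.integral_fintype_prod_eq_prod (ι := Fin 3) (E := fun _ => ℝ)
    ![f₀, f₁, (Iio (0:ℝ)).indicator f₂] (μ := fun _ => volume)
  simp only [Fin.prod_univ_three, Matrix.cons_val_zero, Matrix.cons_val_one, Matrix.head_cons,
    Matrix.cons_val_two, Matrix.tail_cons, ← volume_pi] at key
  rw [key, integral_indicator measurableSet_Iio]

lemma aux_int3 {f₀ f₁ f₂ : ℝ → ℝ} (h₀ : Integrable f₀) (h₁ : Integrable f₁) (h₂ : Integrable f₂) :
    Integrable (fun x : Fin 3 → ℝ => f₀ (x 0) * f₁ (x 1) * f₂ (x 2)) := by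
  have := MeasureTheory.Integrable.fintype_prod (E := ℝ) (f := ![f₀, f₁, f₂]) (μ := fun _ => volume)
    (by intro i; fin_cases i <;> simpa)
  simpa [Fin.prod_univ_three, ← volume_pi] using this

set_option maxHeartbeats 1000000 in
lemma aux_transfer (f : (Fin 3 → ℝ) → ℝ) :
    ∫ V in {V : EuclideanSpace ℝ (Fin 3) | V 2 < 0}, f (fun i => V i)
      = ∫ x in {x : Fin 3 → ℝ | x 2 < 0}, f x := by
  have h := (EuclideanSpace.volume_preserving_symm_measurableEquiv_toLp (ι := Fin 3)).setIntegral_preimage_emb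
    (MeasurableEquiv.measurableEmbedding _) f {x : Fin 3 → ℝ | x 2 < 0}
  exact h

lemma aux_norm_sq (V : EuclideanSpace ℝ (Fin 3)) : ‖V‖ ^ 2 = V 0 ^ 2 + V 1 ^ 2 + V 2 ^ 2 := by
  rw [EuclideanSpace.norm_eq, Real.sq_sqrt (by positivity)]
  simp [Fin.sum_univ_three, sq_abs]

lemma aux_K : (2 * Real.pi) ^ (-(3:ℝ)/2) = (Real.sqrt (2 * Real.pi))⁻¹ ^ 3 := by
  have h2π : (0:ℝ) ≤ 2 * Real.pi := by positivity
  rw [Real.sqrt_eq_rpow, ← Real.rpow_neg h2π,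
    ← Real.rpow_natCast ((2*Real.pi) ^ (-(1/2:ℝ))) 3, ← Real.rpow_mul h2π]
  norm_num

/-- With `μ` the standard Gaussian on ℝ³, `n = (0,0,1)`, `t = (1,0,0)`,
`ξ(V) = (√θ_B V + u_B - u_w)/√θ_w`, and `(u_w - u_B)·n = 0`,
`∫_{V·n<0} (V·n)(V·t)(-μ(V) + (θ_B²/θ_w²) μ(ξ(V))) dV = -((u_w - u_B)·t)/√(2πθ_B)`. -/
theorem stmt11 (uB uw : EuclideanSpace ℝ (Fin 3)) (θB θw : ℝ)
    (hθB : 0 < θB) (hθw : 0 < θw) (h : (uw - uB) 2 = 0) :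
    ∫ V in {V : EuclideanSpace ℝ (Fin 3) | V 2 < 0},
      V 2 * V 0 *
        (-((2 * Real.pi) ^ (-(3 : ℝ) / 2) * Real.exp (-‖V‖ ^ 2 / 2))
          + θB ^ 2 / θw ^ 2 *
            ((2 * Real.pi) ^ (-(3 : ℝ) / 2)
              * Real.exp (-‖(Real.sqrt θw)⁻¹ • (Real.sqrt θB • V + uB - uw)‖ ^ 2 / 2)))
      = -((uw - uB) 0) / Real.sqrt (2 * Real.pi * θB) := by
  have hπ := Real.pi_pos
  have hsB0 : 0 < Real.sqrt θB := Real.sqrt_pos.2 hθB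
  have hsw0 : 0 < Real.sqrt θw := Real.sqrt_pos.2 hθw
  set sB := Real.sqrt θB with hsBdef
  set sw := Real.sqrt θw with hswdef
  set K : ℝ := (2 * Real.pi) ^ (-(3 : ℝ) / 2) with hKdef
  set b : ℝ := sB / sw with hbdef
  have hb : 0 < b := div_pos hsB0 hsw0
  set d0 : ℝ := (uB 0 - uw 0) / sw with hd0def
  set d1 : ℝ := (uB 1 - uw 1) / sw with hd1def
  set c : ℝ := θB ^ 2 / θw ^ 2 with hcdef
  have hu2 : uB 2 - uw 2 = 0 := by
    have h' : uw 2 - uB 2 = 0 := by simpa [PiLp.sub_apply] using h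
    linarith
  have hcomp : ∀ (V : EuclideanSpace ℝ (Fin 3)) (i : Fin 3),
      ((sw⁻¹ : ℝ) • (sB • V + uB - uw)) i = b * V i + (uB i - uw i) / sw := by
    intro V i
    simp only [PiLp.smul_apply, PiLp.add_apply, PiLp.sub_apply, smul_eq_mul, hbdef]
    field_simp
    ring
  -- the six 1-dimensional factor functions
  set g : ℝ → ℝ := fun y => Real.exp (-(1/2 : ℝ) * y ^ 2) with hgdef
  set xg : ℝ → ℝ := fun y => y * Real.exp (-(1/2 : ℝ) * y ^ 2) with hxgdef
  set G0 : ℝ → ℝ := fun y => y * Real.exp (-(1/2 : ℝ) * (b * y + d0) ^ 2) with hG0def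
  set G1 : ℝ → ℝ := fun y => Real.exp (-(1/2 : ℝ) * (b * y + d1) ^ 2) with hG1def
  set G2 : ℝ → ℝ := fun y => y * Real.exp (-(b ^ 2 / 2) * y ^ 2) with hG2def
  -- pointwise identity for the integrand
  have hpt : ∀ V : EuclideanSpace ℝ (Fin 3),
      V 2 * V 0 *
        (-(K * Real.exp (-‖V‖ ^ 2 / 2))
          + c * (K * Real.exp (-‖(sw⁻¹ : ℝ) • (sB • V + uB - uw)‖ ^ 2 / 2)))
      = (-K) * (xg (V 0) * g (V 1) * xg (V 2))
        + (c * K) * (G0 (V 0) * G1 (V 1) * G2 (V 2)) := by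
    intro V
    have hξ : ‖(sw⁻¹ : ℝ) • (sB • V + uB - uw)‖ ^ 2
        = (b * V 0 + d0) ^ 2 + (b * V 1 + d1) ^ 2 + (b * V 2) ^ 2 := by
      rw [aux_norm_sq, hcomp V 0, hcomp V 1, hcomp V 2, hu2, ← hd0def, ← hd1def]
      norm_num
    rw [aux_norm_sq V, hξ,
      show -(V 0 ^ 2 + V 1 ^ 2 + V 2 ^ 2) / 2
        = (-(1/2 : ℝ) * V 0 ^ 2) + ((-(1/2 : ℝ) * V 1 ^ 2) + (-(1/2 : ℝ) * V 2 ^ 2)) by ring,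
      show -((b * V 0 + d0) ^ 2 + (b * V 1 + d1) ^ 2 + (b * V 2) ^ 2) / 2
        = (-(1/2 : ℝ) * (b * V 0 + d0) ^ 2)
          + ((-(1/2 : ℝ) * (b * V 1 + d1) ^ 2) + (-(b ^ 2 / 2) * V 2 ^ 2)) by ring,
      Real.exp_add, Real.exp_add, Real.exp_add, Real.exp_add]
    simp only [hgdef, hxgdef, hG0def, hG1def, hG2def]
    ring
  -- integrability of the factors
  have hg_int : Integrable g := integrable_exp_neg_mul_sq (by norm_num : (0:ℝ) < 1/2)
  have hxg_int : Integrable xg := aux_integrable_xexp (by norm_num : (0:ℝ) < 1/2)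
  have hG0eq : G0 = fun y => b⁻¹ * xg (b * y + d0) - (d0 * b⁻¹) * g (b * y + d0) := by
    funext y
    simp only [hG0def, hxgdef, hgdef]
    field_simp
    ring
  have hG0_int : Integrable G0 := by
    rw [hG0eq]
    exact ((aux_integrable_comp_affine hxg_int d0 hb.ne').const_mul b⁻¹).sub
      ((aux_integrable_comp_affine hg_int d0 hb.ne').const_mul (d0 * b⁻¹))
  have hG1_int : Integrable G1 := aux_integrable_comp_affine hg_int d1 hb.ne'
  have hG2_int : Integrable G2 := aux_integrable_xexp (by positivity : (0:ℝ) < b ^ 2 / 2)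
  -- values of the 1-dimensional integrals
  have v_g : ∫ x, g x = Real.sqrt (2 * Real.pi) := aux_integral_gauss
  have v_xg : ∫ x, xg x = 0 := aux_integral_xexp_zero (1/2)
  have v_xg_Iio : ∫ x in Iio (0:ℝ), xg x = -1 := by
    rw [hxgdef, aux_integral_Iio_xexp (by norm_num : (0:ℝ) < 1/2)]
    norm_num
  have v_G0 : ∫ x, G0 x = -(d0 * b⁻¹ * (b⁻¹ * Real.sqrt (2 * Real.pi))) := by
    rw [hG0eq, integral_sub ((aux_integrable_comp_affine hxg_int d0 hb.ne').const_mul b⁻¹)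
      ((aux_integrable_comp_affine hg_int d0 hb.ne').const_mul (d0 * b⁻¹)),
      integral_const_mul, integral_const_mul, aux_integral_comp_affine xg d0 hb,
      aux_integral_comp_affine g d0 hb, v_xg, v_g]
    ring
  have v_G1 : ∫ x, G1 x = b⁻¹ * Real.sqrt (2 * Real.pi) := by
    have := aux_integral_comp_affine g d1 hb
    rw [hG1def]
    rw [this, v_g]
  have v_G2_Iio : ∫ x in Iio (0:ℝ), G2 x = -(b ^ 2)⁻¹ := by
    have := aux_integral_Iio_xexp (by positivity : (0:ℝ) < b ^ 2 / 2)
    rw [hG2def]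
    rw [this]
    congr 1
    field_simp
  -- integrability of the two product pieces on the half space
  have hs : MeasurableSet {x : Fin 3 → ℝ | x 2 < 0} :=
    measurableSet_lt (measurable_pi_apply 2) measurable_const
  have hA : IntegrableOn (fun x : Fin 3 → ℝ => (-K) * (xg (x 0) * g (x 1) * xg (x 2)))
      {x : Fin 3 → ℝ | x 2 < 0} :=
    ((aux_int3 hxg_int hg_int hxg_int).const_mul (-K)).integrableOn
  have hB : IntegrableOn (fun x : Fin 3 → ℝ => (c * K) * (G0 (x 0) * G1 (x 1) * G2 (x 2)))
      {x : Fin 3 → ℝ | x 2 < 0} :=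
    ((aux_int3 hG0_int hG1_int hG2_int).const_mul (c * K)).integrableOn
  -- chain everything together
  refine Eq.trans (MeasureTheory.setIntegral_congr_fun
      (measurableSet_lt (by fun_prop) measurable_const) (fun V _ => hpt V)) ?_
  refine Eq.trans (aux_transfer
      (fun x : Fin 3 → ℝ => (-K) * (xg (x 0) * g (x 1) * xg (x 2))
        + (c * K) * (G0 (x 0) * G1 (x 1) * G2 (x 2)))) ?_
  rw [MeasureTheory.integral_add hA hB, MeasureTheory.integral_const_mul,
    MeasureTheory.integral_const_mul, aux_split3 xg g xg, aux_split3 G0 G1 G2,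
    v_xg, v_g, v_xg_Iio, v_G0, v_G1, v_G2_Iio]
  -- final arithmetic
  have huw0 : (uw - uB) 0 = uw 0 - uB 0 := by simp [PiLp.sub_apply]
  rw [huw0, Real.sqrt_mul (by positivity : (0:ℝ) ≤ 2 * Real.pi), hKdef, aux_K, ← hsBdef]
  have hQ : 0 < Real.sqrt (2 * Real.pi) := Real.sqrt_pos.2 (by positivity)
  have hBsq : θB = sB ^ 2 := (Real.sq_sqrt hθB.le).symm
  have hwsq : θw = sw ^ 2 := (Real.sq_sqrt hθw.le).symm
  rw [hcdef, hbdef, hd0def, hBsq, hwsq]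
  field_simp
  ring
end

section
/- Let M_{(ρ,u,θ)}(v) = ρ (2πθ)^{-3/2} e^{-|v-u|²/(2θ)} with ρ, θ > 0, and let n be a unit vector and u_w ∈ ℝ³. Then M(v) = M(v - 2((v-u_w)·n)n) for all v ∈ ℝ³ with (v - u_w)·n < 0 if and only if (u - u_w)·n = 0. -/
lemma stmt18_key (v u u_w n : EuclideanSpace ℝ (Fin 3)) (hn : ‖n‖ = 1) :
    ‖v - (2 * (inner ℝ (v - u_w) n : ℝ)) • n - u‖ ^ 2
      = ‖v - u‖ ^ 2 - 4 * (inner ℝ (v - u_w) n : ℝ) * (inner ℝ (v - u) n : ℝ)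
          + 4 * (inner ℝ (v - u_w) n : ℝ) ^ 2 := by
  set a : ℝ := inner ℝ (v - u_w) n with ha
  have h1 : v - (2 * a) • n - u = (v - u) - (2 * a) • n := by abel
  rw [h1, norm_sub_sq_real, real_inner_smul_right, norm_smul, mul_pow]
  simp only [Real.norm_eq_abs, hn, sq_abs, one_pow, mul_one]
  ring

lemma stmt18_inner_diff (v u u_w n : EuclideanSpace ℝ (Fin 3)) :
    (inner ℝ (v - u) n : ℝ) - (inner ℝ (v - u_w) n : ℝ) = (inner ℝ (u_w - u) n : ℝ) := by
  rw [← inner_sub_left]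
  congr 1
  abel

/-- The local Maxwellian `M(v) = ρ(2πθ)^{-3/2} e^{-|v-u|²/(2θ)}` satisfies
`M(v) = M(v - 2((v-u_w)·n)n)` for all `v` with `(v-u_w)·n < 0` if and only if
`(u - u_w)·n = 0`. -/
theorem stmt18 (ρ θ : ℝ) (hρ : 0 < ρ) (hθ : 0 < θ)
    (u u_w n : EuclideanSpace ℝ (Fin 3)) (hn : ‖n‖ = 1) :
    (∀ v : EuclideanSpace ℝ (Fin 3), (inner ℝ (v - u_w) n : ℝ) < 0 →
        ρ * (2 * Real.pi * θ) ^ (-(3 : ℝ) / 2) * Real.exp (-‖v - u‖ ^ 2 / (2 * θ))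
          = ρ * (2 * Real.pi * θ) ^ (-(3 : ℝ) / 2)
              * Real.exp (-‖v - (2 * (inner ℝ (v - u_w) n : ℝ)) • n - u‖ ^ 2 / (2 * θ)))
      ↔ (inner ℝ (u - u_w) n : ℝ) = 0 := by
  have hc : 0 < ρ * (2 * Real.pi * θ) ^ (-(3 : ℝ) / 2) := by
    have := Real.pi_pos; positivity
  have h2θ : (0:ℝ) < 2 * θ := by positivity
  have norm_iff : ∀ v : EuclideanSpace ℝ (Fin 3),
      (ρ * (2 * Real.pi * θ) ^ (-(3 : ℝ) / 2) * Real.exp (-‖v - u‖ ^ 2 / (2 * θ))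
          = ρ * (2 * Real.pi * θ) ^ (-(3 : ℝ) / 2)
              * Real.exp (-‖v - (2 * (inner ℝ (v - u_w) n : ℝ)) • n - u‖ ^ 2 / (2 * θ)))
        ↔ ‖v - u‖ ^ 2 = ‖v - (2 * (inner ℝ (v - u_w) n : ℝ)) • n - u‖ ^ 2 := by
    intro v
    rw [mul_right_inj' hc.ne', Real.exp_eq_exp, div_left_inj' h2θ.ne', neg_inj]
  constructor
  · intro h
    have hvlt : (inner ℝ (u_w - n - u_w) n : ℝ) < 0 := by
      have : u_w - n - u_w = -n := by abel
      rw [this, inner_neg_left, real_inner_self_eq_norm_sq, hn]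
      norm_num
    have hv := (norm_iff (u_w - n)).mp (h (u_w - n) hvlt)
    rw [stmt18_key _ _ _ _ hn] at hv
    have ha : (inner ℝ (u_w - n - u_w) n : ℝ) = -1 := by
      have : u_w - n - u_w = -n := by abel
      rw [this, inner_neg_left, real_inner_self_eq_norm_sq, hn]; norm_num
    rw [ha] at hv
    have hs : (inner ℝ (u_w - n - u) n : ℝ) = -1 := by nlinarith
    have hd := stmt18_inner_diff (u_w - n) u u_w n
    rw [hs, ha] at hd
    have : (inner ℝ (u - u_w) n : ℝ) = -(inner ℝ (u_w - u) n : ℝ) := by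
      rw [← inner_neg_left]; congr 1; abel
    rw [this, ← hd]; ring
  · intro h v hv
    rw [norm_iff, stmt18_key _ _ _ _ hn]
    have hd := stmt18_inner_diff v u u_w n
    have huw : (inner ℝ (u_w - u) n : ℝ) = 0 := by
      have : u_w - u = -(u - u_w) := by abel
      rw [this, inner_neg_left, h, neg_zero]
    have : (inner ℝ (v - u) n : ℝ) = (inner ℝ (v - u_w) n : ℝ) := by
      rw [huw] at hd; linarith
    rw [this]; ring
end

section
/- Let n = (0,0,1), u_B, u_w ∈ ℝ³ with (u_w - u_B)·n = 0, θ_B, θ_w > 0, and μ the standard Gaussian on ℝ³. Then ∫_{V₃<0} V₃ (|V|²/2) (-μ(V) + (θ_B²/θ_w²) μ(ξ(V))) dV = (√(2π)/π)·((θ_B - θ_w)/θ_B - |u_w - u_B|²/(4θ_B)), where ξ(V) = (√θ_B V + u_B - u_w)/√θ_w. -/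
open MeasureTheory Real Set Filter Topology

namespace Stmt19Aux

lemma integrable_pow_mul_gauss {k : ℝ} (hk : 0 < k) (n : ℕ) :
    Integrable (fun x : ℝ => x ^ n * rexp (-k * x ^ 2)) := by
  have h := integrable_rpow_mul_exp_neg_mul_sq hk
    (s := (n : ℝ)) (lt_of_lt_of_le neg_one_lt_zero (Nat.cast_nonneg n))
  simpa [Real.rpow_natCast] using h

lemma tendsto_pow_mul_gauss {k : ℝ} (hk : 0 < k) (n : ℕ) :
    Tendsto (fun x : ℝ => x ^ n * rexp (-k * x ^ 2)) atTop (𝓝 0) := by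
  have h := (tendsto_rpow_abs_mul_exp_neg_mul_sq_cocompact hk (n : ℝ)).mono_left
    _root_.atTop_le_cocompact
  refine h.congr' ?_
  filter_upwards [eventually_ge_atTop (0:ℝ)] with x hx
  rw [abs_of_nonneg hx, rpow_natCast]

lemma hasDerivAt_gauss (k x : ℝ) :
    HasDerivAt (fun x : ℝ => rexp (-k * x ^ 2)) (-2 * k * x * rexp (-k * x ^ 2)) x := by
  have h1 : HasDerivAt (fun x : ℝ => -k * x ^ 2) (-2 * k * x) x := by
    simpa [mul_comm, mul_assoc, mul_left_comm] using (hasDerivAt_pow 2 x).const_mul (-k)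
  simpa [mul_comm] using h1.exp

lemma integral_Ioi_mul_gauss {k : ℝ} (hk : 0 < k) :
    ∫ x in Ioi (0:ℝ), x * rexp (-k * x ^ 2) = (2*k)⁻¹ := by
  have hder : ∀ x ∈ Ici (0:ℝ),
      HasDerivAt (fun x : ℝ => -(2*k)⁻¹ * rexp (-k * x ^ 2)) (x * rexp (-k * x ^ 2)) x := by
    intro x _
    have := (hasDerivAt_gauss k x).const_mul (-(2*k)⁻¹)
    refine this.congr_deriv ?_
    field_simp
  have hint : IntegrableOn (fun x : ℝ => x * rexp (-k * x ^ 2)) (Ioi 0) := by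
    simpa using (integrable_pow_mul_gauss hk 1).integrableOn
  have htend : Tendsto (fun x : ℝ => -(2*k)⁻¹ * rexp (-k * x ^ 2)) atTop (𝓝 0) := by
    have := (tendsto_pow_mul_gauss hk 0).const_mul (-(2*k)⁻¹)
    simpa using this
  have := integral_Ioi_of_hasDerivAt_of_tendsto' hder hint htend
  rw [this]
  simp

lemma integral_Ioi_sq_mul_gauss {k : ℝ} (hk : 0 < k) :
    ∫ x in Ioi (0:ℝ), x ^ 2 * rexp (-k * x ^ 2) = √(π/k) / (4*k) := by
  have hder : ∀ x ∈ Ici (0:ℝ),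
      HasDerivAt (fun x : ℝ => -(2*k)⁻¹ * x * rexp (-k * x ^ 2))
        (x ^ 2 * rexp (-k * x ^ 2) - (2*k)⁻¹ * rexp (-k * x ^ 2)) x := by
    intro x _
    have := (hasDerivAt_id x).const_mul (-(2*k)⁻¹) |>.mul (hasDerivAt_gauss k x)
    refine this.congr_deriv ?_
    simp only [id]
    field_simp
    ring
  have h1 : IntegrableOn (fun x : ℝ => x ^ 2 * rexp (-k * x ^ 2)) (Ioi 0) :=
    (integrable_pow_mul_gauss hk 2).integrableOn
  have h2 : IntegrableOn (fun x : ℝ => (2*k)⁻¹ * rexp (-k * x ^ 2)) (Ioi 0) :=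
    ((integrable_exp_neg_mul_sq hk).const_mul _).integrableOn
  have htend : Tendsto (fun x : ℝ => -(2*k)⁻¹ * x * rexp (-k * x ^ 2)) atTop (𝓝 0) := by
    have := (tendsto_pow_mul_gauss hk 1).const_mul (-(2*k)⁻¹)
    simpa [mul_assoc] using this
  have key := integral_Ioi_of_hasDerivAt_of_tendsto' hder (h1.sub h2) htend
  rw [integral_sub h1 h2] at key
  have hg : ∫ x in Ioi (0:ℝ), (2*k)⁻¹ * rexp (-k * x ^ 2) = (2*k)⁻¹ * (√(π/k)/2) := by
    rw [integral_const_mul, integral_gaussian_Ioi]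
  rw [hg] at key
  have : ∫ x in Ioi (0:ℝ), x ^ 2 * rexp (-k * x ^ 2) = (2*k)⁻¹ * (√(π/k)/2) := by
    have h0 : -(2*k)⁻¹ * (0:ℝ) * rexp (-k * 0 ^ 2) = 0 := by simp
    rw [h0] at key
    linarith
  rw [this]
  ring

lemma integral_Ioi_cube_mul_gauss {k : ℝ} (hk : 0 < k) :
    ∫ x in Ioi (0:ℝ), x ^ 3 * rexp (-k * x ^ 2) = (2*k^2)⁻¹ := by
  have hder : ∀ x ∈ Ici (0:ℝ),
      HasDerivAt (fun x : ℝ => -(2*k)⁻¹ * (x ^ 2 + k⁻¹) * rexp (-k * x ^ 2))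
        (x ^ 3 * rexp (-k * x ^ 2)) x := by
    intro x _
    have h2 : HasDerivAt (fun x : ℝ => -(2*k)⁻¹ * (x ^ 2 + k⁻¹)) (-(2*k)⁻¹ * (2*x)) x := by
      simpa using (((hasDerivAt_pow 2 x).add_const k⁻¹).const_mul (-(2*k)⁻¹))
    have := h2.mul (hasDerivAt_gauss k x)
    refine this.congr_deriv ?_
    field_simp
    ring
  have hint : IntegrableOn (fun x : ℝ => x ^ 3 * rexp (-k * x ^ 2)) (Ioi 0) :=
    (integrable_pow_mul_gauss hk 3).integrableOn
  have htend : Tendsto (fun x : ℝ => -(2*k)⁻¹ * (x ^ 2 + k⁻¹) * rexp (-k * x ^ 2)) atTop (𝓝 0) := by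
    have := ((tendsto_pow_mul_gauss hk 2).const_mul (-(2*k)⁻¹)).add
      ((tendsto_pow_mul_gauss hk 0).const_mul (-(2*k)⁻¹ * k⁻¹))
    simp only [mul_zero, add_zero] at this
    refine this.congr (fun x => by ring)
  have key := integral_Ioi_of_hasDerivAt_of_tendsto' hder hint htend
  rw [key]
  have : rexp (-k * 0 ^ 2) = 1 := by simp
  field_simp
  ring
  simp

lemma integral_Iio_mul_gauss {k : ℝ} (hk : 0 < k) :
    ∫ x in Iio (0:ℝ), x * rexp (-k * x ^ 2) = -(2*k)⁻¹ := by
  have h := integral_comp_neg_Ioi (0:ℝ) (fun x => x * rexp (-k * x ^ 2))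
  simp only [neg_neg, neg_zero, neg_sq] at h
  rw [← setIntegral_congr_set Iio_ae_eq_Iic] at h
  have h2 : ∫ x in Ioi (0:ℝ), -x * rexp (-k * x ^ 2)
      = -∫ x in Ioi (0:ℝ), x * rexp (-k * x ^ 2) := by
    rw [← integral_neg]
    congr 1 with x
    ring
  rw [h2, integral_Ioi_mul_gauss hk] at h
  linarith

lemma integral_Iio_cube_mul_gauss {k : ℝ} (hk : 0 < k) :
    ∫ x in Iio (0:ℝ), x ^ 3 * rexp (-k * x ^ 2) = -(2*k^2)⁻¹ := by
  have h := integral_comp_neg_Ioi (0:ℝ) (fun x => x ^ 3 * rexp (-k * x ^ 2))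
  simp only [neg_zero, neg_sq] at h
  rw [← setIntegral_congr_set Iio_ae_eq_Iic] at h
  have h2 : ∫ x in Ioi (0:ℝ), (-x) ^ 3 * rexp (-k * x ^ 2)
      = -∫ x in Ioi (0:ℝ), x ^ 3 * rexp (-k * x ^ 2) := by
    rw [← integral_neg]
    congr 1 with x
    ring
  rw [h2, integral_Ioi_cube_mul_gauss hk] at h
  linarith

lemma integral_Iio_sq_mul_gauss {k : ℝ} (hk : 0 < k) :
    ∫ x in Iio (0:ℝ), x ^ 2 * rexp (-k * x ^ 2) = √(π/k) / (4*k) := by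
  have h := integral_comp_neg_Ioi (0:ℝ) (fun x => x ^ 2 * rexp (-k * x ^ 2))
  simp only [neg_zero, neg_sq] at h
  rw [← setIntegral_congr_set Iio_ae_eq_Iic] at h
  rw [← h, integral_Ioi_sq_mul_gauss hk]

lemma integral_Iio_gauss {k : ℝ} (hk : 0 < k) :
    ∫ x in Iio (0:ℝ), rexp (-k * x ^ 2) = √(π/k) / 2 := by
  have h := integral_comp_neg_Ioi (0:ℝ) (fun x => rexp (-k * x ^ 2))
  simp only [neg_zero, neg_sq] at h
  rw [← setIntegral_congr_set Iio_ae_eq_Iic] at h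
  rw [← h, integral_gaussian_Ioi]

lemma integral_sq_mul_gauss {k : ℝ} (hk : 0 < k) :
    ∫ x : ℝ, x ^ 2 * rexp (-k * x ^ 2) = √(π/k) / (2*k) := by
  have h1 := (integrable_pow_mul_gauss hk 2)
  rw [← intervalIntegral.integral_Iio_add_Ici (f := fun x : ℝ => x ^ 2 * rexp (-k * x ^ 2))
    h1.integrableOn h1.integrableOn]
  rw [← setIntegral_congr_set Ioi_ae_eq_Ici, integral_Iio_sq_mul_gauss hk,
    integral_Ioi_sq_mul_gauss hk]
  ring

lemma integral_mul_gauss {k : ℝ} (hk : 0 < k) :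
    ∫ x : ℝ, x * rexp (-k * x ^ 2) = 0 := by
  have h1 : Integrable (fun x : ℝ => x * rexp (-k * x ^ 2)) := by
    simpa using integrable_pow_mul_gauss hk 1
  rw [← intervalIntegral.integral_Iio_add_Ici (f := fun x : ℝ => x * rexp (-k * x ^ 2))
    h1.integrableOn h1.integrableOn]
  rw [← setIntegral_congr_set Ioi_ae_eq_Ici, integral_Iio_mul_gauss hk,
    integral_Ioi_mul_gauss hk]
  ring

lemma integral_gauss {k : ℝ} (hk : 0 < k) :
    ∫ x : ℝ, rexp (-k * x ^ 2) = √(π/k) := integral_gaussian k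

lemma integrable_comp_affine {g : ℝ → ℝ} (hg : Integrable g) {b : ℝ} (hb : b ≠ 0) (a : ℝ) :
    Integrable fun x : ℝ => g (b * x + a) := by
  have h1 : Integrable (fun y : ℝ => g (y + a)) :=
    ((measurePreserving_add_right volume a).integrable_comp_emb
      (measurableEmbedding_addRight a)).2 hg
  exact h1.comp_mul_left' hb

lemma integral_comp_affine (g : ℝ → ℝ) {b : ℝ} (hb : 0 < b) (a : ℝ) :
    ∫ x : ℝ, g (b * x + a) = b⁻¹ * ∫ y : ℝ, g y := by
  have h1 : ∀ x : ℝ, b * x + a = b * (x + a / b) := by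
    intro x
    field_simp
  simp_rw [h1]
  rw [show (fun x : ℝ => g (b * (x + a / b))) = fun x : ℝ => (fun y : ℝ => g (b * y)) (x + a / b)
    from rfl]
  rw [integral_add_right_eq_self (fun y : ℝ => g (b * y)) (a / b),
    Measure.integral_comp_mul_left g b, abs_of_pos (inv_pos.2 hb), smul_eq_mul]

lemma integral_gauss_affine {k b : ℝ} (hk : 0 < k) (hb : 0 < b) (a : ℝ) :
    ∫ x : ℝ, rexp (-k * (b * x + a) ^ 2) = b⁻¹ * √(π/k) := by
  rw [integral_comp_affine (fun y : ℝ => rexp (-k * y ^ 2)) hb a, integral_gauss hk]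

lemma integrable_mul_gauss' {k : ℝ} (hk : 0 < k) :
    Integrable (fun x : ℝ => x * rexp (-k * x ^ 2)) := by
  simpa using integrable_pow_mul_gauss hk 1

lemma gauss_shift_decomp {k b : ℝ} (a : ℝ) :
    (fun s : ℝ => ((s - a) / b) ^ 2 * rexp (-k * s ^ 2))
      = fun s : ℝ => (b ^ 2)⁻¹ * (s ^ 2 * rexp (-k * s ^ 2))
        + ((-(2 * a) * (b ^ 2)⁻¹) * (s * rexp (-k * s ^ 2))
          + (a ^ 2 * (b ^ 2)⁻¹) * rexp (-k * s ^ 2)) := by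
  funext s
  field_simp
  ring

lemma integrable_gauss_shift {k b : ℝ} (hk : 0 < k) (hb : 0 < b) (a : ℝ) :
    Integrable (fun s : ℝ => ((s - a) / b) ^ 2 * rexp (-k * s ^ 2)) := by
  rw [gauss_shift_decomp a]
  exact ((integrable_pow_mul_gauss hk 2).const_mul _).add
    (((integrable_mul_gauss' hk).const_mul _).add
      ((integrable_exp_neg_mul_sq hk).const_mul _))

lemma affine_cancel {b : ℝ} (hb : 0 < b) (a x : ℝ) : (b * x + a - a) / b = x := by
  field_simp
  ring

lemma integrable_sq_mul_gauss_affine {k b : ℝ} (hk : 0 < k) (hb : 0 < b) (a : ℝ) :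
    Integrable fun x : ℝ => x ^ 2 * rexp (-k * (b * x + a) ^ 2) := by
  refine (integrable_comp_affine (integrable_gauss_shift hk hb a) (ne_of_gt hb) a).congr
    (Filter.Eventually.of_forall fun x => ?_)
  show ((b * x + a - a) / b) ^ 2 * rexp (-k * (b * x + a) ^ 2) = _
  rw [affine_cancel hb]

lemma integral_sq_mul_gauss_affine {k b : ℝ} (hk : 0 < k) (hb : 0 < b) (a : ℝ) :
    ∫ x : ℝ, x ^ 2 * rexp (-k * (b * x + a) ^ 2)
      = b⁻¹ * (b ^ 2)⁻¹ * (√(π/k) / (2*k) + a ^ 2 * √(π/k)) := by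
  have key := integral_comp_affine (fun s : ℝ => ((s - a) / b) ^ 2 * rexp (-k * s ^ 2)) hb a
  have e1 : ∀ x : ℝ, (b * x + a - a) / b = x := affine_cancel hb a
  simp only [e1] at key
  rw [key, gauss_shift_decomp a]
  have iA : Integrable (fun s : ℝ => (b ^ 2)⁻¹ * (s ^ 2 * rexp (-k * s ^ 2))) :=
    (integrable_pow_mul_gauss hk 2).const_mul _
  have iB : Integrable (fun s : ℝ => (-(2 * a) * (b ^ 2)⁻¹) * (s * rexp (-k * s ^ 2))) :=
    (integrable_mul_gauss' hk).const_mul _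
  have iC : Integrable (fun s : ℝ => (a ^ 2 * (b ^ 2)⁻¹) * rexp (-k * s ^ 2)) :=
    (integrable_exp_neg_mul_sq hk).const_mul _
  have iBC : Integrable (fun s : ℝ => (-(2 * a) * (b ^ 2)⁻¹) * (s * rexp (-k * s ^ 2))
      + (a ^ 2 * (b ^ 2)⁻¹) * rexp (-k * s ^ 2)) := iB.add iC
  rw [integral_add iA iBC, integral_add iB iC]
  rw [integral_const_mul, integral_const_mul, integral_const_mul,
    integral_sq_mul_gauss hk, integral_mul_gauss hk, integral_gauss hk]
  ring


set_option maxHeartbeats 2000000 in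
lemma key (θB θw a0 a1 : ℝ) (hθB : 0 < θB) (hθw : 0 < θw) :
    ∫ v in {v : Fin 3 → ℝ | v 2 < 0},
      v 2 * ((v 0 ^ 2 + v 1 ^ 2 + v 2 ^ 2) / 2) *
        (-((2 * π) ^ (-(3:ℝ) / 2) * rexp (-(v 0 ^ 2 + v 1 ^ 2 + v 2 ^ 2) / 2))
          + θB ^ 2 / θw ^ 2 * ((2 * π) ^ (-(3:ℝ) / 2) *
            rexp (-(((√θw)⁻¹ * (√θB * v 0 + a0)) ^ 2 + ((√θw)⁻¹ * (√θB * v 1 + a1)) ^ 2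
              + ((√θw)⁻¹ * (√θB * v 2)) ^ 2) / 2)))
      = √(2 * π) / π * ((θB - θw) / θB - (a0 ^ 2 + a1 ^ 2) / (4 * θB)) := by
  have hb : (0:ℝ) < √θB := Real.sqrt_pos.2 hθB
  have hk2 : (0:ℝ) < (2*θw)⁻¹ := by positivity
  have hKK : (0:ℝ) < θB / (2*θw) := by positivity
  have h12 : (0:ℝ) < (2:ℝ)⁻¹ := by norm_num
  have hS : MeasurableSet {v : Fin 3 → ℝ | v 2 < 0} :=
    measurableSet_lt (measurable_pi_apply 2) measurable_const
  rw [← integral_indicator hS]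
  -- abbreviations for the six product functions
  set c := (2 * π) ^ (-(3:ℝ) / 2) with hc_def
  have hexp1 : ∀ x y z : ℝ, rexp (-(x ^ 2 + y ^ 2 + z ^ 2) / 2)
      = rexp (-(2:ℝ)⁻¹ * x ^ 2) * rexp (-(2:ℝ)⁻¹ * y ^ 2) * rexp (-(2:ℝ)⁻¹ * z ^ 2) := by
    intro x y z
    rw [← Real.exp_add, ← Real.exp_add]
    congr 1
    ring
  have hw2 : ((√θw)⁻¹) ^ 2 = θw⁻¹ := by
    rw [← Real.sqrt_inv]
    exact Real.sq_sqrt (inv_nonneg.2 hθw.le)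
  have hb2 : (√θB) ^ 2 = θB := Real.sq_sqrt hθB.le
  have hexp2 : ∀ x y z : ℝ,
      rexp (-(((√θw)⁻¹ * (√θB * x + a0)) ^ 2 + ((√θw)⁻¹ * (√θB * y + a1)) ^ 2
        + ((√θw)⁻¹ * (√θB * z)) ^ 2) / 2)
      = rexp (-(2*θw)⁻¹ * (√θB * x + a0) ^ 2) * rexp (-(2*θw)⁻¹ * (√θB * y + a1) ^ 2)
        * rexp (-(θB / (2*θw)) * z ^ 2) := by
    intro x y z
    rw [← Real.exp_add, ← Real.exp_add]
    congr 1
    simp only [mul_pow, hw2, hb2]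
    field_simp
    ring
  have hfun : ({v : Fin 3 → ℝ | v 2 < 0}).indicator
      (fun v => v 2 * ((v 0 ^ 2 + v 1 ^ 2 + v 2 ^ 2) / 2) *
        (-(c * rexp (-(v 0 ^ 2 + v 1 ^ 2 + v 2 ^ 2) / 2))
          + θB ^ 2 / θw ^ 2 * (c *
            rexp (-(((√θw)⁻¹ * (√θB * v 0 + a0)) ^ 2 + ((√θw)⁻¹ * (√θB * v 1 + a1)) ^ 2
              + ((√θw)⁻¹ * (√θB * v 2)) ^ 2) / 2))))
      = fun v : Fin 3 → ℝ =>
        (-(c/2)) * ∏ j, ![fun t : ℝ => t ^ 2 * rexp (-(2:ℝ)⁻¹ * t ^ 2),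
            fun t : ℝ => rexp (-(2:ℝ)⁻¹ * t ^ 2),
            (Iio (0:ℝ)).indicator (fun t : ℝ => t * rexp (-(2:ℝ)⁻¹ * t ^ 2))] j (v j)
        + ((-(c/2)) * ∏ j, ![fun t : ℝ => rexp (-(2:ℝ)⁻¹ * t ^ 2),
            fun t : ℝ => t ^ 2 * rexp (-(2:ℝ)⁻¹ * t ^ 2),
            (Iio (0:ℝ)).indicator (fun t : ℝ => t * rexp (-(2:ℝ)⁻¹ * t ^ 2))] j (v j)
        + ((-(c/2)) * ∏ j, ![fun t : ℝ => rexp (-(2:ℝ)⁻¹ * t ^ 2),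
            fun t : ℝ => rexp (-(2:ℝ)⁻¹ * t ^ 2),
            (Iio (0:ℝ)).indicator (fun t : ℝ => t ^ 3 * rexp (-(2:ℝ)⁻¹ * t ^ 2))] j (v j)
        + ((θB ^ 2 / θw ^ 2 * c / 2) * ∏ j,
              ![fun t : ℝ => t ^ 2 * rexp (-(2*θw)⁻¹ * (√θB * t + a0) ^ 2),
                fun t : ℝ => rexp (-(2*θw)⁻¹ * (√θB * t + a1) ^ 2),
                (Iio (0:ℝ)).indicator (fun t : ℝ => t * rexp (-(θB / (2*θw)) * t ^ 2))] j (v j)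
        + ((θB ^ 2 / θw ^ 2 * c / 2) * ∏ j,
              ![fun t : ℝ => rexp (-(2*θw)⁻¹ * (√θB * t + a0) ^ 2),
                fun t : ℝ => t ^ 2 * rexp (-(2*θw)⁻¹ * (√θB * t + a1) ^ 2),
                (Iio (0:ℝ)).indicator (fun t : ℝ => t * rexp (-(θB / (2*θw)) * t ^ 2))] j (v j)
        + (θB ^ 2 / θw ^ 2 * c / 2) * ∏ j,
              ![fun t : ℝ => rexp (-(2*θw)⁻¹ * (√θB * t + a0) ^ 2),
                fun t : ℝ => rexp (-(2*θw)⁻¹ * (√θB * t + a1) ^ 2),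
                (Iio (0:ℝ)).indicator (fun t : ℝ => t ^ 3 * rexp (-(θB / (2*θw)) * t ^ 2))] j
                (v j))))) := by
    funext v
    simp only [Fin.prod_univ_three, Matrix.cons_val_zero, Matrix.cons_val_one, Matrix.head_cons,
      Matrix.cons_val_two, Matrix.tail_cons]
    by_cases hv : v 2 < 0
    · simp only [Set.indicator_apply, mem_Iio, mem_setOf_eq, if_pos hv]
      rw [hexp1 (v 0) (v 1) (v 2), hexp2 (v 0) (v 1) (v 2)]
      ring
    · simp only [Set.indicator_apply, mem_Iio, mem_setOf_eq, if_neg hv]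
      ring
  rw [hfun]
  -- integrability of the six product terms
  have prodInt : ∀ f g h : ℝ → ℝ, Integrable f → Integrable g → Integrable h →
      Integrable (fun v : Fin 3 → ℝ => ∏ j, ![f, g, h] j (v j)) := by
    intro f g h hf hg hh
    apply Integrable.fintype_prod (f := ![f, g, h])
    intro i
    fin_cases i <;> simpa
  have prodVal : ∀ f g h : ℝ → ℝ, (∫ v : Fin 3 → ℝ, ∏ j, ![f, g, h] j (v j))
      = (∫ x : ℝ, f x) * (∫ x : ℝ, g x) * (∫ x : ℝ, h x) := by
    intro f g h
    rw [integral_fintype_prod_volume_eq_prod (ι := Fin 3) ![f, g, h], Fin.prod_univ_three]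
    simp
  have iE : Integrable (fun t : ℝ => rexp (-(2:ℝ)⁻¹ * t ^ 2)) := integrable_exp_neg_mul_sq h12
  have iE2 : Integrable (fun t : ℝ => t ^ 2 * rexp (-(2:ℝ)⁻¹ * t ^ 2)) :=
    integrable_pow_mul_gauss h12 2
  have iIndE1 : Integrable ((Iio (0:ℝ)).indicator (fun t : ℝ => t * rexp (-(2:ℝ)⁻¹ * t ^ 2))) :=
    (integrable_mul_gauss' h12).indicator measurableSet_Iio
  have iIndE3 : Integrable ((Iio (0:ℝ)).indicator
      (fun t : ℝ => t ^ 3 * rexp (-(2:ℝ)⁻¹ * t ^ 2))) :=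
    (integrable_pow_mul_gauss h12 3).indicator measurableSet_Iio
  have iF0 : Integrable (fun t : ℝ => rexp (-(2*θw)⁻¹ * (√θB * t + a0) ^ 2)) :=
    integrable_comp_affine (integrable_exp_neg_mul_sq hk2) (ne_of_gt hb) a0
  have iF1 : Integrable (fun t : ℝ => rexp (-(2*θw)⁻¹ * (√θB * t + a1) ^ 2)) :=
    integrable_comp_affine (integrable_exp_neg_mul_sq hk2) (ne_of_gt hb) a1
  have iF20 : Integrable (fun t : ℝ => t ^ 2 * rexp (-(2*θw)⁻¹ * (√θB * t + a0) ^ 2)) :=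
    integrable_sq_mul_gauss_affine hk2 hb a0
  have iF21 : Integrable (fun t : ℝ => t ^ 2 * rexp (-(2*θw)⁻¹ * (√θB * t + a1) ^ 2)) :=
    integrable_sq_mul_gauss_affine hk2 hb a1
  have iIndF1 : Integrable ((Iio (0:ℝ)).indicator
      (fun t : ℝ => t * rexp (-(θB / (2*θw)) * t ^ 2))) :=
    (integrable_mul_gauss' hKK).indicator measurableSet_Iio
  have iIndF3 : Integrable ((Iio (0:ℝ)).indicator
      (fun t : ℝ => t ^ 3 * rexp (-(θB / (2*θw)) * t ^ 2))) :=
    (integrable_pow_mul_gauss hKK 3).indicator measurableSet_Iio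
  have A1 := (prodInt _ _ _ iE2 iE iIndE1).const_mul (-(c/2))
  have A2 := (prodInt _ _ _ iE iE2 iIndE1).const_mul (-(c/2))
  have A3 := (prodInt _ _ _ iE iE iIndE3).const_mul (-(c/2))
  have A4 := (prodInt _ _ _ iF20 iF1 iIndF1).const_mul (θB ^ 2 / θw ^ 2 * c / 2)
  have A5 := (prodInt _ _ _ iF0 iF21 iIndF1).const_mul (θB ^ 2 / θw ^ 2 * c / 2)
  have A6 := (prodInt _ _ _ iF0 iF1 iIndF3).const_mul (θB ^ 2 / θw ^ 2 * c / 2)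
  beta_reduce
  have B2 : Integrable (fun x : Fin 3 → ℝ => (-(c/2)) * ∏ j, ![fun t : ℝ => rexp (-(2:ℝ)⁻¹ * t ^ 2), fun t : ℝ => t ^ 2 * rexp (-(2:ℝ)⁻¹ * t ^ 2), (Iio (0:ℝ)).indicator (fun t : ℝ => t * rexp (-(2:ℝ)⁻¹ * t ^ 2))] j (x j) + ((-(c/2)) * ∏ j, ![fun t : ℝ => rexp (-(2:ℝ)⁻¹ * t ^ 2), fun t : ℝ => rexp (-(2:ℝ)⁻¹ * t ^ 2), (Iio (0:ℝ)).indicator (fun t : ℝ => t ^ 3 * rexp (-(2:ℝ)⁻¹ * t ^ 2))] j (x j) + ((θB ^ 2 / θw ^ 2 * c / 2) * ∏ j, ![fun t : ℝ => t ^ 2 * rexp (-(2*θw)⁻¹ * (√θB * t + a0) ^ 2), fun t : ℝ => rexp (-(2*θw)⁻¹ * (√θB * t + a1) ^ 2), (Iio (0:ℝ)).indicator (fun t : ℝ => t * rexp (-(θB / (2*θw)) * t ^ 2))] j (x j) + ((θB ^ 2 / θw ^ 2 * c / 2) * ∏ j, ![fun t : ℝ => rexp (-(2*θw)⁻¹ *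 (√θB * t + a0) ^ 2), fun t : ℝ => t ^ 2 * rexp (-(2*θw)⁻¹ * (√θB * t + a1) ^ 2), (Iio (0:ℝ)).indicator (fun t : ℝ => t * rexp (-(θB / (2*θw)) * t ^ 2))] j (x j) + ((θB ^ 2 / θw ^ 2 * c / 2) * ∏ j, ![fun t : ℝ => rexp (-(2*θw)⁻¹ * (√θB * t + a0) ^ 2), fun t : ℝ => rexp (-(2*θw)⁻¹ * (√θB * t + a1) ^ 2), (Iio (0:ℝ)).indicator (fun t : ℝ => t ^ 3 * rexp (-(θB / (2*θw)) * t ^ 2))] j (x j)))))) := A2.add (A3.add (A4.add (A5.add (A6))))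
  have B3 : Integrable (fun x : Fin 3 → ℝ => (-(c/2)) * ∏ j, ![fun t : ℝ => rexp (-(2:ℝ)⁻¹ * t ^ 2), fun t : ℝ => rexp (-(2:ℝ)⁻¹ * t ^ 2), (Iio (0:ℝ)).indicator (fun t : ℝ => t ^ 3 * rexp (-(2:ℝ)⁻¹ * t ^ 2))] j (x j) + ((θB ^ 2 / θw ^ 2 * c / 2) * ∏ j, ![fun t : ℝ => t ^ 2 * rexp (-(2*θw)⁻¹ * (√θB * t + a0) ^ 2), fun t : ℝ => rexp (-(2*θw)⁻¹ * (√θB * t + a1) ^ 2), (Iio (0:ℝ)).indicator (fun t : ℝ => t * rexp (-(θB / (2*θw)) * t ^ 2))] j (x j) + ((θB ^ 2 / θw ^ 2 * c / 2) * ∏ j, ![fun t : ℝ => rexp (-(2*θw)⁻¹ * (√θB * t + a0) ^ 2), fun t : ℝ => t ^ 2 * rexp (-(2*θw)⁻¹ * (√θB * t + a1) ^ 2), (Iio (0:ℝ)).indicator (fun t : ℝ => t * rexp (-(θB / (2*θw)) * t ^ 2))] j (x j) + ((θB ^ 2 / θw ^ 2 * c / 2) * ∏ j, ![fun t : ℝ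 => rexp (-(2*θw)⁻¹ * (√θB * t + a0) ^ 2), fun t : ℝ => rexp (-(2*θw)⁻¹ * (√θB * t + a1) ^ 2), (Iio (0:ℝ)).indicator (fun t : ℝ => t ^ 3 * rexp (-(θB / (2*θw)) * t ^ 2))] j (x j))))) := A3.add (A4.add (A5.add (A6)))
  have B4 : Integrable (fun x : Fin 3 → ℝ => (θB ^ 2 / θw ^ 2 * c / 2) * ∏ j, ![fun t : ℝ => t ^ 2 * rexp (-(2*θw)⁻¹ * (√θB * t + a0) ^ 2), fun t : ℝ => rexp (-(2*θw)⁻¹ * (√θB * t + a1) ^ 2), (Iio (0:ℝ)).indicator (fun t : ℝ => t * rexp (-(θB / (2*θw)) * t ^ 2))] j (x j) + ((θB ^ 2 / θw ^ 2 * c / 2) * ∏ j, ![fun t : ℝ => rexp (-(2*θw)⁻¹ * (√θB * t + a0) ^ 2), fun t : ℝ => t ^ 2 * rexp (-(2*θw)⁻¹ * (√θB * t + a1) ^ 2), (Iio (0:ℝ)).indicator (fun t : ℝ => t * rexp (-(θB / (2*θw)) * t ^ 2))] j (x j) + ((θB ^ 2 / θw ^ 2 * c / 2) * ∏ j, ![fun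 t : ℝ => rexp (-(2*θw)⁻¹ * (√θB * t + a0) ^ 2), fun t : ℝ => rexp (-(2*θw)⁻¹ * (√θB * t + a1) ^ 2), (Iio (0:ℝ)).indicator (fun t : ℝ => t ^ 3 * rexp (-(θB / (2*θw)) * t ^ 2))] j (x j)))) := A4.add (A5.add (A6))
  have B5 : Integrable (fun x : Fin 3 → ℝ => (θB ^ 2 / θw ^ 2 * c / 2) * ∏ j, ![fun t : ℝ => rexp (-(2*θw)⁻¹ * (√θB * t + a0) ^ 2), fun t : ℝ => t ^ 2 * rexp (-(2*θw)⁻¹ * (√θB * t + a1) ^ 2), (Iio (0:ℝ)).indicator (fun t : ℝ => t * rexp (-(θB / (2*θw)) * t ^ 2))] j (x j) + ((θB ^ 2 / θw ^ 2 * c / 2) * ∏ j, ![fun t : ℝ => rexp (-(2*θw)⁻¹ * (√θB * t + a0) ^ 2), fun t : ℝ => rexp (-(2*θw)⁻¹ * (√θB * t + a1) ^ 2), (Iio (0:ℝ)).indicator (fun t : ℝ => t ^ 3 * rexp (-(θB / (2*θw)) * t ^ 2))] j (x j))) := A5.add (A6)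
  have B6 : Integrable (fun x : Fin 3 → ℝ => (θB ^ 2 / θw ^ 2 * c / 2) * ∏ j, ![fun t : ℝ => rexp (-(2*θw)⁻¹ * (√θB * t + a0) ^ 2), fun t : ℝ => rexp (-(2*θw)⁻¹ * (√θB * t + a1) ^ 2), (Iio (0:ℝ)).indicator (fun t : ℝ => t ^ 3 * rexp (-(θB / (2*θw)) * t ^ 2))] j (x j)) := A6
  rw [integral_add A1 B2, integral_add A2 B3, integral_add A3 B4,
    integral_add A4 B5, integral_add A5 B6]
  simp only [integral_const_mul]
  rw [prodVal, prodVal, prodVal, prodVal, prodVal, prodVal]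
  simp only [integral_indicator measurableSet_Iio]
  rw [integral_sq_mul_gauss h12, integral_gauss h12, integral_Iio_mul_gauss h12,
    integral_Iio_cube_mul_gauss h12,
    integral_sq_mul_gauss_affine hk2 hb a0, integral_sq_mul_gauss_affine hk2 hb a1,
    integral_gauss_affine hk2 hb a0, integral_gauss_affine hk2 hb a1,
    integral_Iio_mul_gauss hKK, integral_Iio_cube_mul_gauss hKK]
  -- arithmetic
  have hsq1 : √(π / (2:ℝ)⁻¹) = √(2*π) := by
    rw [show π / (2:ℝ)⁻¹ = 2 * π from by ring]
  have hsq2 : √(π / (2*θw)⁻¹) = √(2*π) * √θw := by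
    rw [show π / (2*θw)⁻¹ = (2*π) * θw from by field_simp]
    exact Real.sqrt_mul (by positivity) θw
  have hc : c = ((2*π) * √(2*π))⁻¹ := by
    rw [hc_def, show (-(3:ℝ)/2) = -(1 + 1/2) from by norm_num,
      Real.rpow_neg (by positivity), Real.rpow_add (by positivity), Real.rpow_one,
      ← Real.sqrt_eq_rpow]
  rw [hc]
  simp only [hsq1, hsq2]
  have hspos : (0:ℝ) < √(2*π) := Real.sqrt_pos.2 (by positivity)
  have hwpos : (0:ℝ) < √θw := Real.sqrt_pos.2 hθw
  have hs2 : √(2*π) ^ 2 = 2*π := Real.sq_sqrt (by positivity)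
  have hw2' : √θw ^ 2 = θw := Real.sq_sqrt hθw.le
  generalize hgs : √(2*π) = s at hs2 hspos ⊢
  generalize hgw : √θw = sw at hw2' hwpos ⊢
  generalize hgb : √θB = sb at hb2 hb ⊢
  rw [show π = s ^ 2 / 2 from by linarith, ← hw2', ← hb2]
  have hsne : s ≠ 0 := ne_of_gt hspos
  have hwne : sw ≠ 0 := ne_of_gt hwpos
  have hbne : sb ≠ 0 := ne_of_gt hb
  field_simp
  ring


end Stmt19Aux

open MeasureTheory Real Set Stmt19Aux

/-- With `μ` the standard Gaussian on ℝ³, `n = (0,0,1)`, `(u_w - u_B)·n = 0`,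
and `ξ(V) = (√θ_B V + u_B - u_w)/√θ_w`:
`∫_{V₃<0} V₃ (|V|²/2)(-μ(V) + (θ_B²/θ_w²) μ(ξ(V))) dV
  = (√(2π)/π)((θ_B - θ_w)/θ_B - |u_w - u_B|²/(4θ_B))`. -/
theorem stmt19 (uB uw : EuclideanSpace ℝ (Fin 3)) (θB θw : ℝ)
    (hθB : 0 < θB) (hθw : 0 < θw) (h : (uw - uB) 2 = 0) :
    ∫ V in {V : EuclideanSpace ℝ (Fin 3) | V 2 < 0},
      V 2 * (‖V‖ ^ 2 / 2) *
        (-((2 * Real.pi) ^ (-(3 : ℝ) / 2) * Real.exp (-‖V‖ ^ 2 / 2))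
          + θB ^ 2 / θw ^ 2 *
            ((2 * Real.pi) ^ (-(3 : ℝ) / 2)
              * Real.exp (-‖(Real.sqrt θw)⁻¹ • (Real.sqrt θB • V + uB - uw)‖ ^ 2 / 2)))
      = Real.sqrt (2 * Real.pi) / Real.pi
          * ((θB - θw) / θB - ‖uw - uB‖ ^ 2 / (4 * θB)) := by
  have h2 : uB 2 - uw 2 = 0 := by
    have h' : uw 2 - uB 2 = 0 := h
    linarith
  have norm_sq : ∀ z : EuclideanSpace ℝ (Fin 3), ‖z‖ ^ 2 = z 0 ^ 2 + z 1 ^ 2 + z 2 ^ 2 := by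
    intro z
    rw [EuclideanSpace.norm_eq, Real.sq_sqrt (by positivity)]
    simp [Fin.sum_univ_three]
  have hS' : MeasurableSet {v : Fin 3 → ℝ | v 2 < 0} :=
    measurableSet_lt (measurable_pi_apply 2) measurable_const
  have key' := key θB θw (uB 0 - uw 0) (uB 1 - uw 1) hθB hθw
  have hnorm : ‖uw - uB‖ ^ 2 = (uB 0 - uw 0) ^ 2 + (uB 1 - uw 1) ^ 2 := by
    rw [norm_sq (uw - uB)]
    simp only [PiLp.sub_apply]
    rw [show uw 2 - uB 2 = 0 from h]
    ring
  rw [← (MeasurePreserving.symm ((MeasurableEquiv.toLp 2 (Fin 3 → ℝ)).symm)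
      (EuclideanSpace.volume_preserving_symm_measurableEquiv_toLp (Fin 3))).setIntegral_preimage_emb
    (MeasurableEquiv.measurableEmbedding _) _ _]
  rw [show (((MeasurableEquiv.toLp 2 (Fin 3 → ℝ)).symm).symm ⁻¹'
      {V : EuclideanSpace ℝ (Fin 3) | V 2 < 0}) = {v : Fin 3 → ℝ | v 2 < 0} from rfl]
  refine Eq.trans (setIntegral_congr_fun hS' fun x _ => ?_) (key'.trans ?_)
  · show _ = x 2 * ((x 0 ^ 2 + x 1 ^ 2 + x 2 ^ 2) / 2) * _
    simp only [norm_sq, PiLp.smul_apply, PiLp.add_apply, PiLp.sub_apply, smul_eq_mul]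
    rw [show (((MeasurableEquiv.toLp 2 (Fin 3 → ℝ)).symm).symm x) 0 = x 0 from rfl,
      show (((MeasurableEquiv.toLp 2 (Fin 3 → ℝ)).symm).symm x) 1 = x 1 from rfl,
      show (((MeasurableEquiv.toLp 2 (Fin 3 → ℝ)).symm).symm x) 2 = x 2 from rfl]
    rw [show √θB * x 2 + uB 2 - uw 2 = √θB * x 2 from by rw [add_sub_assoc, h2, add_zero]]
    rw [show √θB * x 0 + uB 0 - uw 0 = √θB * x 0 + (uB 0 - uw 0) from by ring,
      show √θB * x 1 + uB 1 - uw 1 = √θB * x 1 + (uB 1 - uw 1) from by ring]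
  · rw [hnorm]
end
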